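/- Decomposition for conjunctions of reachability and safety tasks (correctness core of Algorithm 3): let T₁ be a set of nonempty finite words over A × B, let M₂ be a DFA over A × B with finite state type and accepting set F₂, and let T₂ be the set of nonempty finite words accepted by M₂. For a state q of M₂, define AgentWinsSafeFrom(q) to hold iff there exists an agent strategy σag such that for every environment strategy σenv and every k ≥ 1, M₂.evalFrom q (play(σag, σenv)_{<k}) ∈ F₂. Then the following are equivalent: (i) there exists an agent strategy enforcing Reach T₁ ∩ Safe T₂; (ii) there exists an agent strategy σag such that for every σenv there is k ≥ 1 with play(σag, σenv)_{<k} ∈ T₁, play(σag, σenv)_{<j} ∈ T₂ for all 1 ≤ j ≤ k, and AgentWinsSafeFrom(M₂.eval(play(σag, σenv)_{<k})). -/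

import Mathlib

/-!
If `σag` enforces `Reach T₁ ∩ Safe T₂`, then after any history `w` consistent with it, the
residual strategy wins the safety game from `M₂.eval w`: every environment behaviour after `w`
is part of some environment strategy for the whole play, and `T₂` is the language of `M₂`, so
acceptance of the longer prefixes depends only on `M₂.eval w` and the continuation.

Conversely, the agent follows `σag` until the first nonempty prefix `w ∈ T₁` from which safety is
winnable (it exists by hypothesis and is no later than the promised `k`, so all earlier prefixes
lie in `T₂`), and then plays a safety-winning strategy from `M₂.eval w` on the remaining moves.
-/

/-- The first `k` letters of an infinite trace. -/
def pre {α : Type} (π : ℕ → α) (k : ℕ) : List α := (List.range k).map π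

/-- The finite history of pairs of moves after `k` rounds. -/
def playPrefix {A B : Type} (σag : List B → A) (σenv : List A → B) : ℕ → List (A × B)
  | 0 => []
  | k + 1 =>
      let h := playPrefix σag σenv k
      let a := σag (h.map Prod.snd)
      let b := σenv (h.map Prod.fst ++ [a])
      h ++ [(a, b)]

/-- The infinite play generated by an agent strategy `σag : List B → A`
(the agent moves first) and an environment strategy `σenv : List A → B`:
`a₀ = σag []`, `b₀ = σenv [a₀]`, `a_{i+1} = σag [b₀, …, b_i]`,
`b_{i+1} = σenv [a₀, …, a_{i+1}]`, and `play σag σenv i = (a_i, b_i)`. -/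
def play {A B : Type} (σag : List B → A) (σenv : List A → B) (i : ℕ) : A × B :=
  let h := playPrefix σag σenv i
  let a := σag (h.map Prod.snd)
  let b := σenv (h.map Prod.fst ++ [a])
  (a, b)

/-- Reachability property: some nonempty finite prefix is in `T`. -/
def Reach {A B : Type} (T : Set (List (A × B))) : Set (ℕ → A × B) :=
  {π | ∃ k, 1 ≤ k ∧ pre π k ∈ T}

/-- Safety property: every nonempty finite prefix is in `T`. -/
def Safe {A B : Type} (T : Set (List (A × B))) : Set (ℕ → A × B) :=
  {π | ∀ k, 1 ≤ k → pre π k ∈ T}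

/-- The agent strategy `σag` enforces the property `P`. -/
def AgentEnforces {A B : Type} (σag : List B → A) (P : Set (ℕ → A × B)) : Prop :=
  ∀ σenv : List A → B, play σag σenv ∈ P

/-- The environment strategy `σenv` enforces the property `P`. -/
def EnvEnforces {A B : Type} (σenv : List A → B) (P : Set (ℕ → A × B)) : Prop :=
  ∀ σag : List B → A, play σag σenv ∈ P

/-- The agent strategy `σag` enforces `Task` under the environment
specification `Env`. -/
def EnforcesUnder {A B : Type} (σag : List B → A) (Task Env : Set (ℕ → A × B)) : Prop :=
  ∀ σenv : List A → B, EnvEnforces σenv Env → play σag σenv ∈ Task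

/-- `AgentWinsSafeFrom M q` : the agent has a strategy ensuring that, starting
the run of `M` from state `q`, every state reached after `k ≥ 1` letters of the
play lies in `M.accept`. -/
def AgentWinsSafeFrom {A B Q : Type} (M : DFA (A × B) Q) (q : Q) : Prop :=
  ∃ σag : List B → A, ∀ σenv : List A → B, ∀ k, 1 ≤ k →
    M.evalFrom q (pre (play σag σenv) k) ∈ M.accept

section Play
variable {A B : Type}

lemma playPrefix_length (σ : List B → A) (τ : List A → B) (n : ℕ) :
    (playPrefix σ τ n).length = n := by
  induction n with
  | zero => rfl
  | succ n ih => simp [playPrefix, ih]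

lemma playPrefix_eq_nil_iff (σ : List B → A) (τ : List A → B) (n : ℕ) :
    playPrefix σ τ n = [] ↔ n = 0 := by
  rw [← List.length_eq_zero_iff, playPrefix_length]

lemma playPrefix_succ (σ : List B → A) (τ : List A → B) (n : ℕ) :
    playPrefix σ τ (n + 1) = playPrefix σ τ n ++ [play σ τ n] := rfl

lemma pre_play (σ : List B → A) (τ : List A → B) (n : ℕ) :
    pre (play σ τ) n = playPrefix σ τ n := by
  induction n with
  | zero => rfl
  | succ n ih => rw [pre, List.range_succ, List.map_append, ← pre, ih, playPrefix_succ]; rfl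

lemma playPrefix_take (σ : List B → A) (τ : List A → B) {j n : ℕ} (h : j ≤ n) :
    (playPrefix σ τ n).take j = playPrefix σ τ j := by
  rw [← pre_play, ← pre_play, pre, pre, ← List.map_take, List.take_range, min_eq_left h]

lemma playPrefix_congr {σ σ₁ : List B → A} {τ τ₁ : List A → B} {n : ℕ}
    (hσ : ∀ m < n, σ₁ ((playPrefix σ τ m).map Prod.snd) = σ ((playPrefix σ τ m).map Prod.snd))
    (hτ : ∀ m < n, ∀ a, τ₁ ((playPrefix σ τ m).map Prod.fst ++ [a]) =
      τ ((playPrefix σ τ m).map Prod.fst ++ [a])) :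
    playPrefix σ₁ τ₁ n = playPrefix σ τ n := by
  induction n with
  | zero => rfl
  | succ n ih =>
    rw [playPrefix_succ, playPrefix_succ, play, play,
      ih (fun m hm => hσ m (by omega)) (fun m hm => hτ m (by omega)),
      hσ n n.lt_succ_self, hτ n n.lt_succ_self]

def agentAfter (σ : List B → A) (w : List (A × B)) : List B → A :=
  fun hb => σ (w.map Prod.snd ++ hb)

def envAfter (τ : List A → B) (w : List (A × B)) : List A → B :=
  fun ha => τ (w.map Prod.fst ++ ha)

lemma playPrefix_add {σ σ' : List B → A} {τ τ' : List A → B} {n : ℕ} {w : List (A × B)}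
    (hw : playPrefix σ τ n = w) (hσ : agentAfter σ w = σ')
    (hτ : ∀ ha, ha ≠ [] → envAfter τ w ha = τ' ha) (m : ℕ) :
    playPrefix σ τ (n + m) = w ++ playPrefix σ' τ' m := by
  induction m with
  | zero => simpa [playPrefix] using hw
  | succ m ih =>
    rw [← Nat.add_assoc, playPrefix_succ, ih, playPrefix_succ, play, play, ih]
    have key := hτ ((playPrefix σ' τ' m).map Prod.fst ++ [σ' ((playPrefix σ' τ' m).map Prod.snd)])
      (by simp)
    simp only [envAfter, ← hσ, agentAfter] at key ⊢
    simp only [List.map_append, List.append_assoc, key]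

/-- The witness plays `τ` on histories of length at most `n` and `τ'` on what follows them. -/
lemma exists_env_playPrefix_add (σ : List B → A) (τ τ' : List A → B) (n : ℕ) :
    ∃ τ₁ : List A → B, ∀ m, playPrefix σ τ₁ (n + m) =
      playPrefix σ τ n ++ playPrefix (agentAfter σ (playPrefix σ τ n)) τ' m := by
  classical
  refine ⟨fun ha => if n < ha.length then τ' (ha.drop n) else τ ha,
    playPrefix_add (playPrefix_congr (fun _ _ => rfl) fun m hm a => ?_) rfl fun ha hne => ?_⟩
  · simp [playPrefix_length, show ¬ n < m + 1 by omega]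
  · have hlen : ((playPrefix σ τ n).map Prod.fst).length = n := by simp [playPrefix_length]
    have := List.length_pos_iff.mpr hne
    simp only [envAfter, List.length_append, hlen, List.drop_left' hlen]
    rw [if_pos (by omega)]

end Play

section Switch
variable {A B : Type}

/-- A strategy sees only the environment's moves `bs`; the agent's own moves, and hence the
whole history, are recovered by replaying `σ`. -/
def histOf (σ : List B → A) (bs : List B) : List (A × B) :=
  bs.foldl (fun h b => h ++ [(σ (h.map Prod.snd), b)]) []

lemma histOf_playPrefix (σ : List B → A) (τ : List A → B) (n : ℕ) :
    histOf σ ((playPrefix σ τ n).map Prod.snd) = playPrefix σ τ n := by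
  induction n with
  | zero => rfl
  | succ n ih => rw [playPrefix_succ, List.map_append, histOf, List.foldl_append, ← histOf, ih]; rfl

lemma histOf_take_playPrefix_append (σ : List B → A) (τ : List A → B) {j n : ℕ} (hj : j ≤ n)
    (hb : List B) :
    histOf σ (((playPrefix σ τ n).map Prod.snd ++ hb).take j) = playPrefix σ τ j := by
  rw [List.take_append_of_le_length (by simpa [playPrefix_length]), ← List.map_take,
    playPrefix_take σ τ hj, histOf_playPrefix]

open Classical in
/-- Follow `σ` until the history `w` first satisfies `P`, then continue with `σ' w`. -/
noncomputable def switchStrat (σ : List B → A) (P : List (A × B) → Prop)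
    (σ' : List (A × B) → List B → A) (hb : List B) : A :=
  if h : ∃ j ≤ hb.length, P (histOf σ (hb.take j)) then
    σ' (histOf σ (hb.take (Nat.find h))) (hb.drop (Nat.find h))
  else σ hb

variable {σ : List B → A} {τ : List A → B} {P : List (A × B) → Prop}
  {σ' : List (A × B) → List B → A} {n : ℕ}

lemma switchStrat_playPrefix_of_lt (hmin : ∀ j < n, ¬ P (playPrefix σ τ j)) {m : ℕ}
    (hm : m < n) :
    switchStrat σ P σ' ((playPrefix σ τ m).map Prod.snd) = σ ((playPrefix σ τ m).map Prod.snd) := by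
  rw [switchStrat, dif_neg]
  rintro ⟨j, hj, hP⟩
  rw [List.length_map, playPrefix_length] at hj
  rw [← List.append_nil ((playPrefix σ τ m).map Prod.snd),
    histOf_take_playPrefix_append σ τ hj] at hP
  exact hmin j (by omega) hP

lemma playPrefix_switchStrat_of_le (hmin : ∀ j < n, ¬ P (playPrefix σ τ j)) {j : ℕ}
    (hj : j ≤ n) :
    playPrefix (switchStrat σ P σ') τ j = playPrefix σ τ j :=
  playPrefix_congr (fun _ hm => switchStrat_playPrefix_of_lt hmin (by omega)) fun _ _ _ => rfl

lemma agentAfter_switchStrat (hP : P (playPrefix σ τ n))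
    (hmin : ∀ j < n, ¬ P (playPrefix σ τ j)) :
    agentAfter (switchStrat σ P σ') (playPrefix σ τ n) = σ' (playPrefix σ τ n) := by
  classical
  funext hb
  have hlen : ((playPrefix σ τ n).map Prod.snd).length = n := by simp [playPrefix_length]
  have htake : ∀ j ≤ n,
      histOf σ (((playPrefix σ τ n).map Prod.snd ++ hb).take j) = playPrefix σ τ j :=
    fun j hj => histOf_take_playPrefix_append σ τ hj hb
  have hex : ∃ j ≤ ((playPrefix σ τ n).map Prod.snd ++ hb).length,
      P (histOf σ (((playPrefix σ τ n).map Prod.snd ++ hb).take j)) :=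
    ⟨n, by simp [hlen], by rwa [htake n le_rfl]⟩
  have hfind : Nat.find hex = n :=
    (Nat.find_eq_iff hex).2 ⟨⟨by simp [hlen], by rwa [htake n le_rfl]⟩,
      fun j hj ⟨_, hPj⟩ => hmin j hj (by rwa [htake j hj.le] at hPj)⟩
  rw [agentAfter, switchStrat, dif_pos hex, hfind, htake n le_rfl, List.drop_left' hlen]

lemma playPrefix_switchStrat_add (hP : P (playPrefix σ τ n))
    (hmin : ∀ j < n, ¬ P (playPrefix σ τ j)) (m : ℕ) :
    playPrefix (switchStrat σ P σ') τ (n + m) =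
      playPrefix σ τ n ++ playPrefix (σ' (playPrefix σ τ n)) (envAfter τ (playPrefix σ τ n)) m :=
  playPrefix_add (playPrefix_switchStrat_of_le hmin le_rfl) (agentAfter_switchStrat hP hmin)
    (fun _ _ => rfl) m

end Switch

section Safety
variable {A B Q : Type}

lemma DFA.append_mem_accepts_iff {α : Type} (M : DFA α Q) (w u : List α) :
    w ++ u ∈ M.accepts ↔ M.evalFrom (M.eval w) u ∈ M.accept := by
  rw [DFA.mem_accepts, DFA.eval, DFA.evalFrom_of_append]

lemma AgentWinsSafeFrom.exists_strategy_family [Nonempty A] (M : DFA (A × B) Q) :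
    ∃ safe : Q → List B → A, ∀ q, AgentWinsSafeFrom M q → ∀ (τ : List A → B) (k : ℕ), 1 ≤ k →
      M.evalFrom q (pre (play (safe q) τ) k) ∈ M.accept := by
  classical
  refine ⟨fun q => if h : AgentWinsSafeFrom M q then h.choose else fun _ => Classical.arbitrary A,
    fun q h => ?_⟩
  simpa only [dif_pos h] using h.choose_spec

lemma agentWinsSafeFrom_eval_playPrefix {M : DFA (A × B) Q} {σ : List B → A}
    (hσ : AgentEnforces σ (Safe {w | w ≠ [] ∧ w ∈ M.accepts})) (τ : List A → B) (k : ℕ) :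
    AgentWinsSafeFrom M (M.eval (playPrefix σ τ k)) := by
  refine ⟨agentAfter σ (playPrefix σ τ k), fun τ' m hm => ?_⟩
  obtain ⟨τ₁, hτ₁⟩ := exists_env_playPrefix_add σ τ τ' k
  have := (hσ τ₁ (k + m) (by omega)).2
  rw [pre_play, hτ₁, DFA.append_mem_accepts_iff] at this
  rwa [pre_play]

def IsSwitchPoint (T₁ : Set (List (A × B))) (M : DFA (A × B) Q) (w : List (A × B)) : Prop :=
  w ≠ [] ∧ w ∈ T₁ ∧ AgentWinsSafeFrom M (M.eval w)

lemma play_switchStrat_mem_reach_inter_safe {T₁ : Set (List (A × B))} {M : DFA (A × B) Q}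
    {σ : List B → A} {τ : List A → B} {safe : Q → List B → A}
    (hsafe : ∀ q, AgentWinsSafeFrom M q → ∀ (τ : List A → B) (k : ℕ), 1 ≤ k →
      M.evalFrom q (pre (play (safe q) τ) k) ∈ M.accept)
    {n : ℕ} (hn : IsSwitchPoint T₁ M (playPrefix σ τ n))
    (hmin : ∀ j < n, ¬ IsSwitchPoint T₁ M (playPrefix σ τ j))
    (hsafeBefore : ∀ j, 1 ≤ j → j ≤ n → playPrefix σ τ j ∈ M.accepts) :
    play (switchStrat σ (IsSwitchPoint T₁ M) (fun w => safe (M.eval w))) τ ∈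
      Reach T₁ ∩ Safe {w | w ≠ [] ∧ w ∈ M.accepts} := by
  have hn1 : 1 ≤ n := by
    have hne := hn.1
    rw [Ne, playPrefix_eq_nil_iff] at hne
    omega
  refine ⟨⟨n, hn1, by rw [pre_play, playPrefix_switchStrat_of_le hmin le_rfl]; exact hn.2.1⟩,
    fun j hj => ?_⟩
  rw [pre_play]
  rcases le_or_gt j n with hjn | hjn
  · rw [playPrefix_switchStrat_of_le hmin hjn]
    exact ⟨by rw [Ne, playPrefix_eq_nil_iff]; omega, hsafeBefore j hj hjn⟩
  · obtain ⟨m, rfl⟩ := Nat.exists_eq_add_of_le hjn.le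
    rw [playPrefix_switchStrat_add hn hmin]
    refine ⟨by simp [hn.1], (DFA.append_mem_accepts_iff _ _ _).2 ?_⟩
    rw [← pre_play (safe _)]
    exact hsafe _ hn.2.2 _ m (by omega)

end Safety

theorem reach_and_safe_decomposition_general {A B Q₂ : Type}
    (T₁ : Set (List (A × B))) (M₂ : DFA (A × B) Q₂)
    (T₂ : Set (List (A × B))) (hT₂ : T₂ = {w | w ≠ [] ∧ w ∈ M₂.accepts}) :
    (∃ σag : List B → A, AgentEnforces σag (Reach T₁ ∩ Safe T₂)) ↔
      (∃ σag : List B → A, ∀ σenv : List A → B, ∃ k, 1 ≤ k ∧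
        pre (play σag σenv) k ∈ T₁ ∧
        (∀ j, 1 ≤ j → j ≤ k → pre (play σag σenv) j ∈ T₂) ∧
        AgentWinsSafeFrom M₂ (M₂.eval (pre (play σag σenv) k))) := by
  subst hT₂
  constructor
  · rintro ⟨σ, hσ⟩
    refine ⟨σ, fun τ => ?_⟩
    obtain ⟨k, hk, hkT₁⟩ := (hσ τ).1
    refine ⟨k, hk, hkT₁, fun j hj _ => (hσ τ).2 j hj, ?_⟩
    rw [pre_play]
    exact agentWinsSafeFrom_eval_playPrefix (fun τ => (hσ τ).2) τ k
  · rintro ⟨σ, hσ⟩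
    have : Nonempty A := ⟨σ []⟩
    classical
    obtain ⟨safe, hsafe⟩ := AgentWinsSafeFrom.exists_strategy_family (B := B) M₂
    refine ⟨switchStrat σ (IsSwitchPoint T₁ M₂) (fun w => safe (M₂.eval w)), fun τ => ?_⟩
    obtain ⟨k, hk, hkT₁, hkT₂, hkwin⟩ := hσ τ
    simp only [pre_play] at hkT₁ hkT₂ hkwin
    have hkSwitch : IsSwitchPoint T₁ M₂ (playPrefix σ τ k) :=
      ⟨by rw [Ne, playPrefix_eq_nil_iff]; omega, hkT₁, hkwin⟩
    have hex : ∃ n, IsSwitchPoint T₁ M₂ (playPrefix σ τ n) := ⟨k, hkSwitch⟩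
    exact play_switchStrat_mem_reach_inter_safe hsafe (Nat.find_spec hex)
      (fun j => Nat.find_min hex)
      fun j hj hjn => (hkT₂ j hj (hjn.trans (Nat.find_min' hex hkSwitch))).2

/-- Decomposition for conjunctions of reachability and safety tasks
(correctness core of Algorithm 3): the agent can enforce `Reach T₁ ∩ Safe T₂`
iff it can enforce reaching `T₁` while staying in `T₂`, arriving at a state of
`M₂` from which it can win the safety game for `T₂`. -/
theorem reach_and_safe_decomposition {A B Q₂ : Type}
    [Fintype A] [Fintype B] [Nonempty A] [Nonempty B] [Fintype Q₂]
    (T₁ : Set (List (A × B))) (M₂ : DFA (A × B) Q₂)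
    (T₂ : Set (List (A × B))) (hT₂ : T₂ = {w | w ≠ [] ∧ w ∈ M₂.accepts}) :
    (∃ σag : List B → A, AgentEnforces σag (Reach T₁ ∩ Safe T₂)) ↔
      (∃ σag : List B → A, ∀ σenv : List A → B, ∃ k, 1 ≤ k ∧
        pre (play σag σenv) k ∈ T₁ ∧
        (∀ j, 1 ≤ j → j ≤ k → pre (play σag σenv) j ∈ T₂) ∧
        AgentWinsSafeFrom M₂ (M₂.eval (pre (play σag σenv) k))) :=
  reach_and_safe_decomposition_general T₁ M₂ T₂ hT₂
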